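/- arXiv:math/9905019 — 2 statements merged into one kernel-verified Lean document; each statement's English description precedes it below -/
import Mathlib

section
/- If Q(k) → ∞, the projection π: E → ω(c) satisfies π⁻¹(c) = {⟨0⟩}: the only element of E projecting to the turning point c is the all-zero sequence. -/
/-- `T` is a unimodal map of `[0,1]` with turning point `c`. -/
structure Unimodal (T : ℝ → ℝ) (c : ℝ) : Prop where
  cont : ContinuousOn T (Set.Icc 0 1)
  maps : Set.MapsTo T (Set.Icc 0 1) (Set.Icc 0 1)
  hc : c ∈ Set.Ioo (0 : ℝ) 1
  mono : StrictMonoOn T (Set.Icc 0 c)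
  anti : StrictAntiOn T (Set.Icc c 1)

/-- Left endpoint of the domain of the left central branch of `T^n`. -/
noncomputable def leftEnd (T : ℝ → ℝ) (c : ℝ) (n : ℕ) : ℝ :=
  sInf {x : ℝ | 0 ≤ x ∧ Set.InjOn (T^[n]) (Set.Icc x c)}

/-- `n` is a cutting time iff `c ∈ D_n`, the image of the central branch of `T^n`. -/
def CuttingTime (T : ℝ → ℝ) (c : ℝ) (n : ℕ) : Prop :=
  c ∈ T^[n] '' Set.Icc (leftEnd T c n) c

/-- The level `D_n = [c_n, c_{n − S_k}]` where `k = max{i : S_i < n}`. -/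
noncomputable def Dlev (T : ℝ → ℝ) (c : ℝ) (S : ℕ → ℕ) (n : ℕ) : Set ℝ :=
  Set.uIcc (T^[n] c) (T^[n - S (sSup {i | S i < n})] c)

/-- Tail sum `Σ_{k > i} e_k S_k` of a digit sequence. -/
noncomputable def tailSum (S e : ℕ → ℕ) (i : ℕ) : ℕ := ∑' k : ℕ, if i < k then e k * S k else 0

/-- Greedy representation of `n` in the cutting-time base `(S_i)`. -/
noncomputable def IsGreedyRep (S : ℕ → ℕ) (n : ℕ) (e : ℕ → ℕ) : Prop :=
  (∀ i, e i ≤ 1) ∧ (∃ N, ∀ i, N ≤ i → e i = 0) ∧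
  (n = ∑' i : ℕ, e i * S i) ∧
  (∀ i, (e i = 1 ↔ IsGreatest {j | S j ≤ n - tailSum S e i} i))

/-- The number-system space `E` associated to a kneading map `Q`. -/
def Eset (Q : ℕ → ℕ) : Set (ℕ → ℕ) :=
  {e | (∀ i, e i ≤ 1) ∧ ∀ i j, e i = 1 → Q (i + 1) ≤ j → j < i → e j = 0}


open Set Function

section AuxLemmas

variable {T : ℝ → ℝ} {c : ℝ}

lemma iter_mapsTo (hT : Unimodal T c) (n : ℕ) :
    Set.MapsTo (T^[n]) (Set.Icc 0 1) (Set.Icc 0 1) := hT.maps.iterate n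

lemma iter_contOn (hT : Unimodal T c) : ∀ n, ContinuousOn (T^[n]) (Set.Icc 0 1)
  | 0 => by simpa using continuousOn_id
  | (n+1) => by
      rw [Function.iterate_succ']
      exact hT.cont.comp (iter_contOn hT n) (iter_mapsTo hT n)

/-- smaller iterates inherit injectivity -/
lemma subInj {f : ℝ → ℝ} {s : Set ℝ} {m q : ℕ} (h : m ≤ q)
    (hinj : Set.InjOn (f^[q]) s) : Set.InjOn (f^[m]) s := by
  intro a ha b hb hab
  apply hinj ha hb
  have hq : q = (q - m) + m := (Nat.sub_add_cancel h).symm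
  rw [hq, Function.iterate_add_apply, Function.iterate_add_apply, hab]

lemma Tlt (hT : Unimodal T c) {y : ℝ} (hy : y ∈ Set.Icc (0:ℝ) 1) (hyc : y ≠ c) :
    T y < T c := by
  rcases lt_or_gt_of_ne hyc with h | h
  · exact hT.mono ⟨hy.1, h.le⟩ ⟨hT.hc.1.le, le_refl c⟩ h
  · exact hT.anti ⟨le_refl c, hT.hc.2.le⟩ ⟨h.le, hy.2⟩ h

lemma uIccSub {a b lo hi : ℝ} (ha : a ∈ Set.Icc lo hi) (hb : b ∈ Set.Icc lo hi) :
    Set.uIcc a b ⊆ Set.Icc lo hi := by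
  intro x hx
  rcases Set.mem_uIcc.mp hx with ⟨h1, h2⟩ | ⟨h1, h2⟩
  · exact ⟨ha.1.trans h1, h2.trans hb.2⟩
  · exact ⟨hb.1.trans h1, h2.trans ha.2⟩

lemma leftEnd_nonneg (n : ℕ) (hc0 : (0:ℝ) ≤ c) : 0 ≤ leftEnd T c n := by
  apply le_csInf
  · refine ⟨c, hc0, ?_⟩
    have : (Set.Icc c c).Subsingleton := by
      rw [Set.Icc_self]; exact Set.subsingleton_singleton
    exact this.injOn _
  · exact fun b hb => hb.1

lemma leftEnd_le_c (n : ℕ) (hc0 : (0:ℝ) ≤ c) : leftEnd T c n ≤ c := by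
  apply csInf_le ⟨0, fun y hy => hy.1⟩
  refine ⟨hc0, ?_⟩
  have : (Set.Icc c c).Subsingleton := by
    rw [Set.Icc_self]; exact Set.subsingleton_singleton
  exact this.injOn _

lemma leftEnd_le {n : ℕ} {x : ℝ} (hx0 : 0 ≤ x)
    (h : Set.InjOn (T^[n]) (Set.Icc x c)) : leftEnd T c n ≤ x :=
  csInf_le ⟨0, fun y hy => hy.1⟩ ⟨hx0, h⟩

/-- The fold lemma: if `T^[p] ζ = c` with `x < ζ < c`, then `T^[q]` is not
injective on `[x, c]` for `q > p`. -/
lemma fold (hT : Unimodal T c) (p q : ℕ) (hpq : p < q) (x ζ : ℝ)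
    (hx0 : 0 ≤ x) (hxζ : x < ζ) (hζc : ζ < c) (hpζ : T^[p] ζ = c)
    (hinj : Set.InjOn (T^[q]) (Set.Icc x c)) : False := by
  have hc0 : (0:ℝ) ≤ c := hT.hc.1.le
  have hc1 : c ≤ 1 := hT.hc.2.le
  have hxc : x ≤ c := (hxζ.trans hζc).le
  have hsub : Set.Icc x c ⊆ Set.Icc (0:ℝ) 1 := Set.Icc_subset_Icc hx0 hc1
  have hgi : Set.InjOn (T^[p]) (Set.Icc x c) := subInj hpq.le hinj
  have hhi : Set.InjOn (T^[p+1]) (Set.Icc x c) := subInj hpq hinj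
  have hmx : x ∈ Set.Icc x c := ⟨le_refl x, hxc⟩
  have hmζ : ζ ∈ Set.Icc x c := ⟨hxζ.le, hζc.le⟩
  have hmc : c ∈ Set.Icc x c := ⟨hxc, le_refl c⟩
  have hu1 : T^[p] x ∈ Set.Icc (0:ℝ) 1 := iter_mapsTo hT p (hsub hmx)
  have hv1 : T^[p] c ∈ Set.Icc (0:ℝ) 1 := iter_mapsTo hT p (hsub hmc)
  have huc : T^[p] x ≠ c := fun h => hxζ.ne (hgi hmx hmζ (h.trans hpζ.symm))
  have hvc : T^[p] c ≠ c := fun h => hζc.ne (hgi hmζ hmc (hpζ.trans h.symm))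
  have hTu : T (T^[p] x) < T c := Tlt hT hu1 huc
  have hTv : T (T^[p] c) < T c := Tlt hT hv1 hvc
  set θ := max (T (T^[p] x)) (T (T^[p] c)) with hθdef
  have hθlt : θ < T c := max_lt hTu hTv
  have hpx : T^[p+1] x = T (T^[p] x) := Function.iterate_succ_apply' T p x
  have hpζ' : T^[p+1] ζ = T c := by rw [Function.iterate_succ_apply', hpζ]
  have hpc : T^[p+1] c = T (T^[p] c) := Function.iterate_succ_apply' T p c
  have hcont : ContinuousOn (T^[p+1]) (Set.Icc (0:ℝ) 1) := iter_contOn hT (p+1)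
  -- a on the left of ζ
  have hmemθ1 : θ ∈ Set.uIcc (T^[p+1] x) (T^[p+1] ζ) := by
    rw [hpx, hpζ']
    exact Set.mem_uIcc.mpr (Or.inl ⟨le_max_left _ _, hθlt.le⟩)
  obtain ⟨a, ha, hfa⟩ := intermediate_value_uIcc
    (hcont.mono (uIccSub (hsub hmx) (hsub hmζ))) hmemθ1
  -- b on the right of ζ
  have hmemθ2 : θ ∈ Set.uIcc (T^[p+1] ζ) (T^[p+1] c) := by
    rw [hpc, hpζ']
    exact Set.mem_uIcc.mpr (Or.inr ⟨le_max_right _ _, hθlt.le⟩)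
  obtain ⟨b, hb, hfb⟩ := intermediate_value_uIcc
    (hcont.mono (uIccSub (hsub hmζ) (hsub hmc))) hmemθ2
  have ha' : a ∈ Set.Icc x ζ := by rwa [Set.uIcc_of_le hxζ.le] at ha
  have hb' : b ∈ Set.Icc ζ c := by rwa [Set.uIcc_of_le hζc.le] at hb
  have haζ : a ≠ ζ := fun h => (hθlt.ne) (by rw [← hfa, h, hpζ'])
  have hbζ : b ≠ ζ := by
    intro h; exact (hθlt.ne) (by rw [← hfb, h, hpζ'])
  have hane : a < ζ := lt_of_le_of_ne ha'.2 haζ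
  have hbne : ζ < b := lt_of_le_of_ne hb'.1 (Ne.symm hbζ)
  have : a = b := hhi ⟨ha'.1, ha'.2.trans hζc.le⟩ ⟨hxζ.le.trans hb'.1, hb'.2⟩
    (hfa.trans hfb.symm)
  exact absurd this (by intro h; rw [h] at hane; exact lt_asymm hane hbne)

/-- largest S_m-precritical point in [0,c] -/
noncomputable def zeta (T : ℝ → ℝ) (c : ℝ) (S : ℕ → ℕ) (m : ℕ) : ℝ :=
  sSup {x : ℝ | x ∈ Set.Icc 0 c ∧ T^[S m] x = c}

section Zeta

variable {T : ℝ → ℝ} {c : ℝ} {S Q : ℕ → ℕ}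

lemma zeta_spec (hT : Unimodal T c) (hSge : ∀ m, 1 ≤ S m)
    (hcut : ∀ n, 1 ≤ n → (CuttingTime T c n ↔ ∃ l, S l = n)) (m : ℕ) :
    zeta T c S m ∈ Set.Icc (0:ℝ) c ∧ T^[S m] (zeta T c S m) = c := by
  have hc0 : (0:ℝ) ≤ c := hT.hc.1.le
  have hc1 : c ≤ 1 := hT.hc.2.le
  have hcc : CuttingTime T c (S m) := (hcut (S m) (hSge m)).mpr ⟨m, rfl⟩
  obtain ⟨x₀, hx₀, hfx₀⟩ := hcc
  set P : Set ℝ := {x : ℝ | x ∈ Set.Icc 0 c ∧ T^[S m] x = c} with hP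
  have hPne : P.Nonempty := ⟨x₀, ⟨(leftEnd_nonneg _ hc0).trans hx₀.1, hx₀.2⟩, hfx₀⟩
  have hPeq : P = Set.Icc (0:ℝ) c ∩ (T^[S m]) ⁻¹' {c} := by
    ext y; simp [hP, Set.mem_setOf_eq]
  have hclosed : IsClosed P := by
    rw [hPeq]
    exact ((iter_contOn hT (S m)).mono (Set.Icc_subset_Icc le_rfl hc1)).preimage_isClosed_of_isClosed
      isClosed_Icc isClosed_singleton
  have hPc : IsCompact P := isCompact_Icc.of_isClosed_subset hclosed (fun y hy => hy.1)
  have := hPc.sSup_mem hPne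
  exact ⟨this.1, this.2⟩

lemma zeta_lt (hT : Unimodal T c) (hSge : ∀ m, 1 ≤ S m)
    (hcut : ∀ n, 1 ≤ n → (CuttingTime T c n ↔ ∃ l, S l = n))
    (hnp : ∀ j, 1 ≤ j → T^[j] c ≠ c) (m : ℕ) : zeta T c S m < c := by
  have h := zeta_spec hT hSge hcut (S := S) m
  rcases lt_or_eq_of_le h.1.2 with h' | h'
  · exact h'
  · rw [h'] at h; exact absurd h.2 (hnp (S m) (hSge m))

/-- inner induction: injectivity of all iterates between consecutive cutting times -/
lemma good_inner (hT : Unimodal T c) (hmono : StrictMono S) (hSge : ∀ m, 1 ≤ S m)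
    (hrec : ∀ l, 1 ≤ l → S l = S (l - 1) + S (Q l))
    (hcut : ∀ n, 1 ≤ n → (CuttingTime T c n ↔ ∃ l, S l = n))
    (hnp : ∀ j, 1 ≤ j → T^[j] c ≠ c) (m : ℕ)
    (hbase : Set.InjOn (T^[S m]) (Set.Icc (zeta T c S m) c)) :
    ∀ j, j ≤ S (Q (m+1)) → Set.InjOn (T^[S m + j]) (Set.Icc (zeta T c S m) c) := by
  have hc0 : (0:ℝ) ≤ c := hT.hc.1.le
  have hc1 : c ≤ 1 := hT.hc.2.le
  set ζ := zeta T c S m with hζdef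
  have hζ := zeta_spec hT hSge hcut (S := S) m
  have hζ0 : (0:ℝ) ≤ ζ := hζ.1.1
  have hζc : ζ ≤ c := hζ.1.2
  have hIccsub : Set.Icc ζ c ⊆ Set.Icc (0:ℝ) 1 := Set.Icc_subset_Icc hζ0 hc1
  intro j
  induction j with
  | zero => intro _; simpa using hbase
  | succ j ihj =>
    intro hj1
    have hj' : j ≤ S (Q (m+1)) := by omega
    have hji : Set.InjOn (T^[S m + j]) (Set.Icc ζ c) := ihj hj'
    set K : Set ℝ := T^[S m + j] '' Set.Icc ζ c with hK
    have hK01 : K ⊆ Set.Icc (0:ℝ) 1 := by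
      rintro y ⟨w, hw, rfl⟩
      exact iter_mapsTo hT _ (hIccsub hw)
    -- no two image points strictly straddle c
    have hns : ∀ u ∈ K, ∀ v ∈ K, u < c → c < v → False := by
      rintro u ⟨a, ha, rfl⟩ v ⟨b, hb, rfl⟩ hu hv
      have hcont : ContinuousOn (T^[S m + j]) (Set.uIcc a b) :=
        (iter_contOn hT _).mono ((uIccSub ha hb).trans hIccsub)
      have hcm : c ∈ Set.uIcc (T^[S m + j] a) (T^[S m + j] b) :=
        Set.mem_uIcc.mpr (Or.inl ⟨hu.le, hv.le⟩)
      obtain ⟨w, hw, hfw⟩ := intermediate_value_uIcc hcont hcm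
      have hw' : w ∈ Set.Icc ζ c := uIccSub ha hb hw
      rcases Nat.eq_zero_or_pos j with rfl | hjpos
      · -- j = 0 : unique preimage forces w = ζ, endpoint value c, contradiction
        have hfζ0 : T^[S m + 0] ζ = c := by simpa using hζ.2
        have hwζ : w = ζ := hji hw' ⟨le_refl ζ, hζc⟩ (hfw.trans hfζ0.symm)
        rcases Set.mem_uIcc.mp hw with ⟨h1, h2⟩ | ⟨h1, h2⟩
        · have haζ : a = ζ := le_antisymm (hwζ ▸ h1) ha.1
          rw [haζ, hfζ0] at hu; exact lt_irrefl c hu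
        · have hbζ : b = ζ := le_antisymm (hwζ ▸ h1) hb.1
          rw [hbζ, hfζ0] at hv; exact lt_irrefl c hv
      · -- j ≥ 1 : w gives a cutting time strictly between S m and S (m+1)
        rcases eq_or_lt_of_le hw'.2 with hwc | hwc
        · exact hnp (S m + j) (by have := hSge m; omega) (hwc ▸ hfw)
        · have hzp : leftEnd T c (S m + j) ≤ ζ := leftEnd_le hζ0 hji
          have hcutp : CuttingTime T c (S m + j) :=
            ⟨w, ⟨hzp.trans hw'.1, hw'.2⟩, hfw⟩
          obtain ⟨i, hi⟩ := (hcut (S m + j) (by have := hSge m; omega)).mp hcutp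
          have h1 : S m < S i := by rw [hi]; omega
          have hrec' : S (m+1) = S m + S (Q (m+1)) := by simpa using hrec (m+1) (by omega)
          have h2 : S i < S (m+1) := by rw [hi, hrec']; omega
          have hmi : m < i := hmono.lt_iff_lt.mp h1
          have him : i < m + 1 := hmono.lt_iff_lt.mp h2
          omega
    -- so the image lies on one side of c
    have hside : K ⊆ Set.Icc (0:ℝ) c ∨ K ⊆ Set.Icc c 1 := by
      by_cases hall : ∀ y ∈ K, y ≤ c
      · exact Or.inl (fun y hy => ⟨(hK01 hy).1, hall y hy⟩)
      · push_neg at hall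
        obtain ⟨v, hv, hvc⟩ := hall
        refine Or.inr (fun y hy => ⟨?_, (hK01 hy).2⟩)
        by_contra hyc
        push_neg at hyc
        exact hns y hy v hv hyc hvc
    have hTinj : Set.InjOn T K := by
      rcases hside with h | h
      · exact hT.mono.injOn.mono h
      · exact hT.anti.injOn.mono h
    have heq : T^[S m + (j+1)] = T ∘ T^[S m + j] := by
      rw [show S m + (j+1) = (S m + j) + 1 by omega, Function.iterate_succ']
    rw [heq]
    exact hTinj.comp hji (Set.mapsTo_image _ _)

/-- main structural lemma -/
lemma good (hT : Unimodal T c) (hmono : StrictMono S) (hS0 : S 0 = 1)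
    (hSge : ∀ m, 1 ≤ S m)
    (hrec : ∀ l, 1 ≤ l → S l = S (l - 1) + S (Q l))
    (hcut : ∀ n, 1 ≤ n → (CuttingTime T c n ↔ ∃ l, S l = n))
    (hnp : ∀ j, 1 ≤ j → T^[j] c ≠ c) :
    ∀ m, ∀ j, j ≤ S (Q (m+1)) → Set.InjOn (T^[S m + j]) (Set.Icc (zeta T c S m) c) := by
  have hc0 : (0:ℝ) ≤ c := hT.hc.1.le
  intro m
  induction m with
  | zero =>
    have hbase : Set.InjOn (T^[S 0]) (Set.Icc (zeta T c S 0) c) := by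
      rw [hS0, Function.iterate_one]
      exact hT.mono.injOn.mono
        (Set.Icc_subset_Icc (zeta_spec hT hSge hcut (S := S) 0).1.1 le_rfl)
    exact good_inner hT hmono hSge hrec hcut hnp 0 hbase
  | succ m' IHm =>
    have hζ' := zeta_spec hT hSge hcut (S := S) m'
    have hζ'' := zeta_spec hT hSge hcut (S := S) (m'+1)
    have hrec' : S (m'+1) = S m' + S (Q (m'+1)) := by simpa using hrec (m'+1) (by omega)
    have hinj' : Set.InjOn (T^[S (m'+1)]) (Set.Icc (zeta T c S m') c) := by
      rw [hrec']; exact IHm _ le_rfl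
    -- leftEnd (S (m'+1)) ≥ zeta m'
    have hzlow : zeta T c S m' ≤ leftEnd T c (S (m'+1)) := by
      apply le_csInf
      · exact ⟨c, hc0, by
          have : (Set.Icc c c).Subsingleton := by
            rw [Set.Icc_self]; exact Set.subsingleton_singleton
          exact this.injOn _⟩
      · rintro x ⟨hx0, hxinj⟩
        by_contra hlt
        push_neg at hlt
        exact fold hT (S m') (S (m'+1)) (hmono (Nat.lt_succ_self m')) x (zeta T c S m')
          hx0 hlt (zeta_lt hT hSge hcut hnp m') hζ'.2 hxinj
    -- zeta mono
    have hzm : zeta T c S m' ≤ zeta T c S (m'+1) := by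
      obtain ⟨x₀, hx₀, hfx₀⟩ := (hcut (S (m'+1)) (hSge _)).mpr ⟨m'+1, rfl⟩
      have hx₀' : x₀ ∈ {x : ℝ | x ∈ Set.Icc 0 c ∧ T^[S (m'+1)] x = c} :=
        ⟨⟨(leftEnd_nonneg _ hc0).trans hx₀.1, hx₀.2⟩, hfx₀⟩
      have hle : x₀ ≤ zeta T c S (m'+1) :=
        le_csSup ⟨c, fun y hy => hy.1.2⟩ hx₀'
      exact (hzlow.trans hx₀.1).trans hle
    have hbase : Set.InjOn (T^[S (m'+1)]) (Set.Icc (zeta T c S (m'+1)) c) :=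
      hinj'.mono (Set.Icc_subset_Icc_left hzm)
    exact good_inner hT hmono hSge hrec hcut hnp (m'+1) hbase

end Zeta

section NumberSystem

variable {S Q : ℕ → ℕ} {e : ℕ → ℕ}

/-- key combinatorial bound: admissible partial sums stay below the next cutting time -/
lemma lemL (hmono : StrictMono S) (hSge : ∀ m, 1 ≤ S m)
    (hQlt : ∀ l, 1 ≤ l → Q l < l) (hrec : ∀ l, 1 ≤ l → S l = S (l - 1) + S (Q l))
    (he : e ∈ Eset Q) : ∀ i, ∑ j ∈ Finset.range i, e j * S j < S i := by
  intro i
  induction i using Nat.strong_induction_on with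
  | _ i IH =>
  by_cases hz : ∀ j, j < i → e j = 0
  · have h0 : ∑ j ∈ Finset.range i, e j * S j = 0 :=
      Finset.sum_eq_zero (fun j hj => by rw [hz j (Finset.mem_range.mp hj)]; ring)
    rw [h0]; exact hSge i
  · push_neg at hz
    obtain ⟨j₀, hj₀i, hj₀⟩ := hz
    have hi1 : 1 ≤ i := by omega
    set l := Nat.findGreatest (fun j => e j ≠ 0) (i-1) with hldef
    have hel : e l ≠ 0 := Nat.findGreatest_spec (P := fun j => e j ≠ 0) (by omega : j₀ ≤ i - 1) hj₀
    have hll : l ≤ i - 1 := Nat.findGreatest_le _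
    have hli : l < i := by omega
    have hgt : ∀ j, l < j → j < i → e j = 0 := by
      intro j h1 h2
      by_contra h
      exact (Nat.findGreatest_is_greatest h1 (by omega)) h
    have hel1 : e l = 1 := le_antisymm (he.1 l) (by omega)
    have hQl : Q (l+1) ≤ l := by have := hQlt (l+1) (by omega); omega
    have h1 : ∑ j ∈ Finset.range i, e j * S j = ∑ j ∈ Finset.range (l+1), e j * S j := by
      refine (Finset.sum_subset (by
        intro x hx
        simp only [Finset.mem_range] at *
        omega) ?_).symm
      intro x hx hx'
      simp only [Finset.mem_range] at hx hx'
      rw [hgt x (by omega) hx]; ring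
    have h2 : ∑ j ∈ Finset.range (l+1), e j * S j
        = ∑ j ∈ Finset.range l, e j * S j + S l := by
      rw [Finset.sum_range_succ, hel1, one_mul]
    have h3 : ∑ j ∈ Finset.range l, e j * S j
        = ∑ j ∈ Finset.range (Q (l+1)), e j * S j := by
      refine (Finset.sum_subset (by
        intro x hx
        simp only [Finset.mem_range] at *
        omega) ?_).symm
      intro x hx hx'
      simp only [Finset.mem_range] at hx hx'
      rw [he.2 l x hel1 (by omega) hx]; ring
    have h4 := IH (Q (l+1)) (by omega)
    have h5 : S (l+1) = S l + S (Q (l+1)) := by simpa using hrec (l+1) (by omega)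
    have h6 : S (l+1) ≤ S i := hmono.monotone (by omega)
    omega

/-- finitely supported admissible sequences are greedy representations -/
lemma greedy_of_eset (hmono : StrictMono S) (hSge : ∀ m, 1 ≤ S m)
    (hQlt : ∀ l, 1 ≤ l → Q l < l) (hrec : ∀ l, 1 ≤ l → S l = S (l - 1) + S (Q l))
    (he : e ∈ Eset Q) (N : ℕ) (hN : ∀ i, N ≤ i → e i = 0) :
    IsGreedyRep S (∑' i, e i * S i) e := by
  have hL := lemL hmono hSge hQlt hrec he
  have hsum_eq : ∀ M, N ≤ M → ∑' i, e i * S i = ∑ j ∈ Finset.range M, e j * S j := by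
    intro M hM
    apply tsum_eq_sum
    intro b hb
    simp only [Finset.mem_range] at hb
    rw [hN b (by omega)]; ring
  refine ⟨he.1, ⟨N, hN⟩, rfl, ?_⟩
  intro i
  set M := max N (i+1) with hMdef
  have hNM : N ≤ M := le_max_left _ _
  have hiM : i + 1 ≤ M := le_max_right _ _
  have htail : tailSum S e i = ∑ j ∈ Finset.Ico (i+1) M, e j * S j := by
    rw [tailSum, tsum_eq_sum (s := Finset.Ico (i+1) M) ?_]
    · apply Finset.sum_congr rfl
      intro j hj
      rw [if_pos]
      exact (Finset.mem_Ico.mp hj).1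
    · intro b hb
      simp only [Finset.mem_Ico] at hb
      push_neg at hb
      by_cases hbi : i < b
      · rw [if_pos hbi, hN b (by omega)]; ring
      · rw [if_neg hbi]
  have hsplit : ∑ j ∈ Finset.range M, e j * S j
      = ∑ j ∈ Finset.range (i+1), e j * S j + ∑ j ∈ Finset.Ico (i+1) M, e j * S j := by
    simp only [Finset.range_eq_Ico]
    exact (Finset.sum_Ico_consecutive _ (Nat.zero_le (i+1)) hiM).symm
  have hntail : (∑' i', e i' * S i') - tailSum S e i
      = ∑ j ∈ Finset.range (i+1), e j * S j := by
    rw [hsum_eq M hNM, htail, hsplit, Nat.add_sub_cancel]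
  rw [hntail]
  rcases Nat.le_one_iff_eq_zero_or_eq_one.mp (he.1 i) with h0 | h1
  · simp only [h0]
    refine iff_of_false (by omega) ?_
    rintro ⟨hmem, -⟩
    have hmem' : S i ≤ ∑ j ∈ Finset.range (i+1), e j * S j := hmem
    have : ∑ j ∈ Finset.range (i+1), e j * S j
        = ∑ j ∈ Finset.range i, e j * S j := by
      rw [Finset.sum_range_succ, h0]; ring
    have := hL i
    omega
  · simp only [h1]
    refine iff_of_true trivial ⟨?_, ?_⟩
    · have h := Finset.single_le_sum (f := fun j => e j * S j)
        (fun _ _ => Nat.zero_le _) (Finset.self_mem_range_succ i)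
      simpa [h1] using h
    · intro j hj
      have hj' : S j ≤ ∑ j ∈ Finset.range (i+1), e j * S j := hj
      have := hL (i+1)
      have : S j < S (i+1) := by omega
      have := hmono.lt_iff_lt.mp this
      omega

end NumberSystem

section Periodic

variable {T : ℝ → ℝ} {c : ℝ} {S Q : ℕ → ℕ}

lemma no_periodic (hT : Unimodal T c) (hmono : StrictMono S) (hS0 : S 0 = 1)
    (hSi : ∀ i, i + 1 ≤ S i)
    (hrec : ∀ l, 1 ≤ l → S l = S (l - 1) + S (Q l))
    (hcut : ∀ n, 1 ≤ n → (CuttingTime T c n ↔ ∃ l, S l = n))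
    (hQinf : Filter.Tendsto Q Filter.atTop Filter.atTop)
    (j : ℕ) (hj : 1 ≤ j) (hfix : T^[j] c = c) : False := by
  have hc0 : (0:ℝ) ≤ c := hT.hc.1.le
  have hfixm : ∀ m, T^[j * m] c = c := by
    intro m
    induction m with
    | zero => simp
    | succ m ih => rw [Nat.mul_succ, Function.iterate_add_apply, hfix, ih]
  have hcutm : ∀ m, 1 ≤ m → ∃ i, S i = j * m := by
    intro m hm
    refine (hcut (j*m) (by have : 1 ≤ j*m := Nat.one_le_iff_ne_zero.mpr (Nat.mul_ne_zero (by omega) (by omega)); omega)).mp ⟨c, ⟨leftEnd_le_c _ hc0, le_refl c⟩, hfixm m⟩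
  obtain ⟨M, hM⟩ : ∃ M, ∀ i ≥ M, j + 1 ≤ Q i :=
    Filter.eventually_atTop.mp (hQinf.eventually_ge_atTop (j + 1))
  set m := S M + 1 with hmdef
  obtain ⟨a, ha⟩ := hcutm m (by omega)
  obtain ⟨b, hb⟩ := hcutm (m+1) (by omega)
  have hjm : m ≤ j * m := Nat.le_mul_of_pos_left m (by omega)
  have hSMa : S M < S a := by omega
  have hMa : M < a := hmono.lt_iff_lt.mp hSMa
  have hb' : S b = j * m + j := by rw [hb, Nat.mul_succ]
  have hab : a < b := hmono.lt_iff_lt.mp (by omega)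
  have h1 : S (a+1) ≤ S b := hmono.monotone (by omega)
  have h2 : S (a+1) = S a + S (Q (a+1)) := by simpa using hrec (a+1) (by omega)
  have h3 : j + 1 ≤ Q (a+1) := hM (a+1) (by omega)
  have h4 := hSi (Q (a+1))
  omega

end Periodic

/-- If `Q(k) → ∞`, the projection `π : E → ω(c)` (with `π(⟨n⟩) = c_n` and
`π(e) ∈ ⋂ D_{b(i)}` for sequences with infinitely many nonzero digits) satisfies
`π⁻¹(c) = {⟨0⟩}`: the only element of `E` projecting to `c` is the zero sequence. -/
theorem pi_preimage_turning_point (T : ℝ → ℝ) (c : ℝ) (hT : Unimodal T c)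
    (S Q : ℕ → ℕ) (hmono : StrictMono S) (hS0 : S 0 = 1) (hS1 : S 1 = 2)
    (hQlt : ∀ l, 1 ≤ l → Q l < l) (hrec : ∀ l, 1 ≤ l → S l = S (l - 1) + S (Q l))
    (hcut : ∀ n, 1 ≤ n → (CuttingTime T c n ↔ ∃ l, S l = n))
    (hQinf : Filter.Tendsto Q Filter.atTop Filter.atTop)
    (hdiam : Filter.Tendsto (fun n => Metric.diam (Dlev T c S n)) Filter.atTop (nhds 0))
    (π : (ℕ → ℕ) → ℝ)
    (hπfin : ∀ (n : ℕ) (e : ℕ → ℕ), IsGreedyRep S n e → π e = T^[n] c)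
    (hπinf : ∀ e ∈ Eset Q, (¬∃ N, ∀ i, N ≤ i → e i = 0) →
      ∀ m : ℕ, 1 ≤ ∑ j ∈ Finset.range m, e j * S j →
        π e ∈ Dlev T c S (∑ j ∈ Finset.range m, e j * S j)) :
    ∀ e ∈ Eset Q, (π e = c ↔ e = fun _ => 0) := by
  have hc0 : (0:ℝ) ≤ c := hT.hc.1.le
  have hc1 : c ≤ 1 := hT.hc.2.le
  have hSi : ∀ i, i + 1 ≤ S i := by
    intro i
    induction i with
    | zero => simp [hS0]
    | succ i ih =>
      have h2 : S i < S (i + 1) := hmono (Nat.lt_succ_self i)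
      omega
  have hSge : ∀ m, 1 ≤ S m := fun m => by have := hSi m; omega
  have hnp : ∀ j, 1 ≤ j → T^[j] c ≠ c :=
    fun j hj hfix => no_periodic hT hmono hS0 hSi hrec hcut hQinf j hj hfix
  -- the zero sequence is the greedy representation of 0
  have hgreedy0 : IsGreedyRep S 0 (fun _ => 0) := by
    refine ⟨fun _ => by simp, ⟨0, fun _ _ => rfl⟩, by simp, ?_⟩
    intro i
    refine iff_of_false (by simp) ?_
    rintro ⟨hmem, -⟩
    have hmem' : S i ≤ 0 - tailSum S (fun _ => 0) i := hmem
    have := hSge i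
    omega
  intro e he
  constructor
  · -- forward direction
    intro hpc
    by_contra hne
    have hex : ∃ i, e i ≠ 0 := by
      rcases Function.ne_iff.mp hne with ⟨i, hi⟩
      exact ⟨i, hi⟩
    by_cases hfin : ∃ N, ∀ i, N ≤ i → e i = 0
    · -- finitely supported : e is a greedy representation of a positive integer
      obtain ⟨N, hN⟩ := hfin
      have hg := greedy_of_eset hmono hSge hQlt hrec he N hN
      have hπ := hπfin _ e hg
      obtain ⟨k, hk⟩ := hex
      have hsum_eq : ∑' i, e i * S i = ∑ j ∈ Finset.range (max N (k+1)), e j * S j := by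
        apply tsum_eq_sum
        intro b hb
        simp only [Finset.mem_range] at hb
        rw [hN b (by omega)]; ring
      have hterm : 1 ≤ e k * S k := by
        have := hSge k
        have : 1 ≤ e k := by omega
        calc 1 = 1 * 1 := by ring
        _ ≤ e k * S k := Nat.mul_le_mul this (hSge k)
      have hge : 1 ≤ ∑' i, e i * S i := by
        rw [hsum_eq]
        refine le_trans hterm ?_
        simpa using Finset.single_le_sum (f := fun j => e j * S j)
          (fun _ _ => Nat.zero_le _)
          (Finset.mem_range.mpr (by omega : k < max N (k+1)))
      exact hnp _ hge (hπ.symm.trans hpc)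
    · -- infinitely supported
      obtain ⟨k₀, hk₀⟩ := hex
      have hfin' : ∀ N, ∃ i, N ≤ i ∧ e i ≠ 0 := by
        intro N
        by_contra h
        push_neg at h
        exact hfin ⟨N, fun i hi => by
          by_contra h'
          exact h' (h i hi)⟩
      have hexk : ∃ i, e i ≠ 0 := ⟨k₀, hk₀⟩
      set k := Nat.find hexk with hkdef
      have hek : e k ≠ 0 := Nat.find_spec hexk
      have hkmin : ∀ j, j < k → e j = 0 := fun j hj => by
        have := Nat.find_min hexk hj
        simpa using this
      have hexl : ∃ i, k < i ∧ e i ≠ 0 := by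
        obtain ⟨i, hi1, hi2⟩ := hfin' (k+1)
        exact ⟨i, by omega, hi2⟩
      set l := Nat.find hexl with hldef
      obtain ⟨hkl, hel⟩ := Nat.find_spec hexl
      have hlmin : ∀ j, k < j → j < l → e j = 0 := by
        intro j h1 h2
        have := Nat.find_min hexl h2
        push_neg at this
        by_contra h'
        exact h' (by
          by_contra h''
          exact absurd (this h1)  h'')
      have hek1 : e k = 1 := le_antisymm (he.1 k) (Nat.one_le_iff_ne_zero.mpr hek)
      have hel1 : e l = 1 := le_antisymm (he.1 l) (Nat.one_le_iff_ne_zero.mpr hel)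
      have hQk : k < Q (l+1) := by
        by_contra h
        push_neg at h
        exact hek (he.2 l k hel1 h hkl)
      -- the partial sum at stage l+1
      have hsum : ∑ j ∈ Finset.range (l+1), e j * S j = S k + S l := by
        have hsub : ({k, l} : Finset ℕ) ⊆ Finset.range (l+1) := by
          intro x hx
          simp only [Finset.mem_insert, Finset.mem_singleton] at hx
          rcases hx with rfl | rfl <;> simp [Finset.mem_range] <;> omega
        have hz : ∀ x ∈ Finset.range (l+1), x ∉ ({k, l} : Finset ℕ) → e x * S x = 0 := by
          intro x hx hx'
          simp only [Finset.mem_insert, Finset.mem_singleton, not_or] at hx'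
          simp only [Finset.mem_range] at hx
          rcases lt_trichotomy x k with h | h | h
          · rw [hkmin x h]; ring
          · exact absurd h hx'.1
          · rw [hlmin x h (by omega)]; ring
        rw [← Finset.sum_subset hsub hz, Finset.sum_pair (by omega : k ≠ l), hek1, hel1,
          one_mul, one_mul]
      set n := S k + S l with hndef
      have hn1 : 1 ≤ n := by have := hSge k; omega
      have hmem : c ∈ Dlev T c S n := by
        have := hπinf e he hfin (l+1) (by rw [hsum]; omega)
        rw [hsum] at this
        rwa [hpc] at this
      have hSl : S l < n := by have := hSge k; omega
      have hrecl : S (l+1) = S l + S (Q (l+1)) := by simpa using hrec (l+1) (by omega)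
      have hSk : S k < S (Q (l+1)) := hmono hQk
      have hnlt : n < S (l+1) := by omega
      -- the sup in Dlev n is l
      have hsup : sSup {i | S i < n} = l := by
        have hba : BddAbove {i | S i < n} := by
          refine ⟨n, fun i hi => ?_⟩
          have := hSi i
          simp only [Set.mem_setOf_eq] at hi
          omega
        have hne : Set.Nonempty {i | S i < n} := ⟨l, hSl⟩
        apply le_antisymm
        · apply csSup_le hne
          intro i hi
          simp only [Set.mem_setOf_eq] at hi
          by_contra h
          push_neg at h
          have : S (l+1) ≤ S i := hmono.monotone (by omega)
          omega
        · exact le_csSup hba hSl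
      have hDeq : Dlev T c S n = Set.uIcc (T^[n] c) (T^[S k] c) := by
        rw [Dlev, hsup, hndef, Nat.add_sub_cancel]
      rw [hDeq] at hmem
      -- structural input
      set ζ := zeta T c S l with hζdef
      have hζs := zeta_spec hT hSge hcut (S := S) l
      have hinj : Set.InjOn (T^[n]) (Set.Icc ζ c) := by
        have := good hT hmono hS0 hSge hrec hcut hnp l (S k) hSk.le
        rwa [show S l + S k = n by omega] at this
      have hzn : leftEnd T c n ≤ ζ := leftEnd_le hζs.1.1 hinj
      have hfζ : T^[n] ζ = T^[S k] c := by
        rw [hndef, Function.iterate_add_apply, hζs.2]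
      have hcmem : c ∈ Set.uIcc (T^[n] ζ) (T^[n] c) := by
        rw [hfζ, Set.uIcc_comm]
        exact hmem
      have hIcc01 : Set.uIcc ζ c ⊆ Set.Icc (0:ℝ) 1 :=
        uIccSub ⟨hζs.1.1, hζs.1.2.trans hc1⟩ ⟨hc0, hc1⟩
      obtain ⟨w, hw, hfw⟩ := intermediate_value_uIcc
        ((iter_contOn hT n).mono hIcc01) hcmem
      have hw' : w ∈ Set.Icc ζ c := by rwa [Set.uIcc_of_le hζs.1.2] at hw
      have hcutn : CuttingTime T c n := ⟨w, ⟨hzn.trans hw'.1, hw'.2⟩, hfw⟩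
      obtain ⟨i, hi⟩ := (hcut n hn1).mp hcutn
      rcases le_or_gt i l with h | h
      · have : S i ≤ S l := hmono.monotone h
        omega
      · have : S (l+1) ≤ S i := hmono.monotone (by omega)
        omega
  · rintro rfl
    rw [hπfin 0 _ hgreedy0]
    simp
end AuxLemmas
end

section
/- For a unimodal map with kneading invariant κ and τ(n) = min{ m > 0 : κ_m ≠ κ_{m+n} }, the cutting times satisfy S_0 = 1 and S_{k+1} = S_k + τ(S_k) for all k ≥ 0; equivalently, the first S_k symbols of κ satisfy κ_1⋯κ_{S_k} = κ_1⋯κ_{S_{k−1}} κ_1⋯κ'_{S_{Q(k)}}, where κ' denotes the flipped symbol. -/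
open Set Function

namespace CutAux

variable {T : ℝ → ℝ} {c : ℝ}

lemma cont_iter (hT : Unimodal T c) (n : ℕ) : ContinuousOn (T^[n]) (Set.Icc 0 1) := by
  induction n with
  | zero => simpa using continuousOn_id
  | succ n ih =>
      rw [Function.iterate_succ']
      exact hT.cont.comp ih (hT.maps.iterate n)

lemma sub01 (hT : Unimodal T c) {x : ℝ} (hx : 0 ≤ x) : Icc x c ⊆ Icc (0:ℝ) 1 :=
  fun y hy => ⟨hx.trans hy.1, hy.2.trans hT.hc.2.le⟩

lemma injOn_of_le {f : ℝ → ℝ} {s : Set ℝ} {i j : ℕ} (hij : i ≤ j) (h : InjOn (f^[j]) s) :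
    InjOn (f^[i]) s := by
  intro a ha b hb hab
  obtain ⟨t, rfl⟩ := Nat.exists_eq_add_of_le hij
  apply h ha hb
  rw [add_comm, Function.iterate_add_apply, Function.iterate_add_apply, hab]

lemma leftEnd_bdd : BddBelow {x : ℝ | 0 ≤ x ∧ Set.InjOn (T^[n]) (Set.Icc x c)} :=
  ⟨0, fun _ hx => hx.1⟩

lemma leftEnd_ne (hT : Unimodal T c) (n : ℕ) :
    {x : ℝ | 0 ≤ x ∧ Set.InjOn (T^[n]) (Set.Icc x c)}.Nonempty :=
  ⟨c, hT.hc.1.le, by simp [Set.Icc_self, Set.injOn_singleton]⟩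

lemma leftEnd_nonneg (hT : Unimodal T c) (n : ℕ) : 0 ≤ leftEnd T c n :=
  le_csInf (leftEnd_ne hT n) fun _ hx => hx.1

lemma leftEnd_le (hT : Unimodal T c) {n : ℕ} {p : ℝ} (hp0 : 0 ≤ p)
    (hinj : Set.InjOn (T^[n]) (Set.Icc p c)) : leftEnd T c n ≤ p :=
  csInf_le leftEnd_bdd ⟨hp0, hinj⟩

/-- key "not injective" lemma: if the `n`-th image of `[x,c]` straddles `c` strictly,
then `T^[n+s]` is not injective on `[x,c]` for any `s ≥ 1`. -/
lemma not_injOn (hT : Unimodal T c) {x u v : ℝ} {n s : ℕ}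
    (hx : 0 ≤ x) (hu : u ∈ Icc x c) (hv : v ∈ Icc x c)
    (hfu : T^[n] u < c) (hfv : c < T^[n] v) (hs : 1 ≤ s) :
    ¬ Set.InjOn (T^[n + s]) (Set.Icc x c) := by
  intro hinj
  have hsub : Icc x c ⊆ Icc (0:ℝ) 1 := sub01 hT hx
  have hu01 : T^[n] u ∈ Icc (0:ℝ) 1 := hT.maps.iterate n (hsub hu)
  have hv01 : T^[n] v ∈ Icc (0:ℝ) 1 := hT.maps.iterate n (hsub hv)
  set aL := T^[n] u with haL
  set aR := T^[n] v with haR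
  have h1 : T aL < T c := hT.mono ⟨hu01.1, hfu.le⟩ ⟨hT.hc.1.le, le_refl c⟩ hfu
  have h2 : T aR < T c := hT.anti ⟨le_refl c, hT.hc.2.le⟩ ⟨hfv.le, hv01.2⟩ hfv
  have hM : max (T aL) (T aR) < T c := max_lt h1 h2
  set w := (max (T aL) (T aR) + T c) / 2 with hw
  have hw1 : max (T aL) (T aR) < w := by rw [hw]; linarith
  have hw2 : w < T c := by rw [hw]; linarith
  -- s1 on the left of c with T s1 = w
  have hcontL : ContinuousOn T (uIcc aL c) := by
    apply hT.cont.mono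
    rw [uIcc_of_le hfu.le]
    exact fun y hy => ⟨hu01.1.trans hy.1, hy.2.trans hT.hc.2.le⟩
  obtain ⟨s1, hs1m, hs1⟩ := intermediate_value_uIcc hcontL
    (show w ∈ uIcc (T aL) (T c) by
      rw [uIcc_of_le h1.le]; exact ⟨(le_max_left _ _).trans hw1.le, hw2.le⟩)
  have hcontR : ContinuousOn T (uIcc c aR) := by
    apply hT.cont.mono
    rw [uIcc_of_le hfv.le]
    exact fun y hy => ⟨hT.hc.1.le.trans hy.1, hy.2.trans hv01.2⟩
  obtain ⟨s2, hs2m, hs2⟩ := intermediate_value_uIcc hcontR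
    (show w ∈ uIcc (T c) (T aR) by
      rw [uIcc_of_ge h2.le]; exact ⟨(le_max_right _ _).trans hw1.le, hw2.le⟩)
  rw [uIcc_of_le hfu.le] at hs1m
  rw [uIcc_of_le hfv.le] at hs2m
  have hs1c : s1 < c := lt_of_le_of_ne hs1m.2 (fun h => hw2.ne (by rw [← hs1, h]))
  have hs2c : c < s2 := lt_of_le_of_ne hs2m.1 (fun h => hw2.ne (by rw [← hs2, ← h]))
  -- pull back s1 s2 through T^[n]
  have hcont2 : ContinuousOn (T^[n]) (uIcc u v) :=
    (cont_iter hT n).mono ((Set.uIcc_subset_Icc hu hv).trans hsub)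
  have himg : uIcc (T^[n] u) (T^[n] v) ⊆ T^[n] '' uIcc u v := intermediate_value_uIcc hcont2
  have hs1i : s1 ∈ uIcc (T^[n] u) (T^[n] v) := by
    rw [uIcc_of_le (hfu.trans hfv).le]; exact ⟨hs1m.1, hs1c.le.trans hfv.le⟩
  have hs2i : s2 ∈ uIcc (T^[n] u) (T^[n] v) := by
    rw [uIcc_of_le (hfu.trans hfv).le]; exact ⟨hfu.le.trans hs2c.le, hs2m.2⟩
  obtain ⟨α, hαm, hα⟩ := himg hs1i
  obtain ⟨β, hβm, hβ⟩ := himg hs2i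
  have hαx : α ∈ Icc x c := Set.uIcc_subset_Icc hu hv hαm
  have hβx : β ∈ Icc x c := Set.uIcc_subset_Icc hu hv hβm
  have hαβ : α ≠ β := by
    intro h; rw [h, hβ] at hα; exact absurd hα (ne_of_gt (hs1c.trans hs2c))
  obtain ⟨t, rfl⟩ : ∃ t, s = t + 1 := ⟨s - 1, (Nat.succ_pred_eq_of_pos hs).symm⟩
  apply hαβ
  apply hinj hαx hβx
  have e : n + (t + 1) = t + (n + 1) := by omega
  rw [e, Function.iterate_add_apply T t (n+1) α, Function.iterate_add_apply T t (n+1) β]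
  congr 1
  rw [Function.iterate_succ_apply', Function.iterate_succ_apply', hα, hβ, hs1, hs2]

/-- Injectivity on the *closed* interval `[leftEnd, c]`. -/
lemma injOn_leftEnd (hT : Unimodal T c) (n : ℕ) :
    Set.InjOn (T^[n]) (Set.Icc (leftEnd T c n) c) := by
  set l := leftEnd T c n with hl
  have hl0 : 0 ≤ l := leftEnd_nonneg hT n
  have hne := leftEnd_ne hT (c := c) n
  have hinf : sInf {x : ℝ | 0 ≤ x ∧ Set.InjOn (T^[n]) (Set.Icc x c)} = l := rfl
  have key : ∀ a b : ℝ, a ∈ Icc l c → b ∈ Icc l c → a < b → T^[n] a ≠ T^[n] b := by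
    intro a b ha hb hab habv
    set z := (a + b) / 2 with hz
    have hz1 : a < z := by rw [hz]; linarith
    have hz2 : z < b := by rw [hz]; linarith
    have hzc : z ≤ c := hz2.le.trans hb.2
    obtain ⟨x, hxS, hxz⟩ := exists_lt_of_csInf_lt hne (hinf ▸ (lt_of_le_of_lt ha.1 hz1))
    have hzb : T^[n] z ≠ T^[n] b := by
      intro h
      exact hz2.ne (hxS.2 ⟨hxz.le, hzc⟩ ⟨(hxz.trans hz2).le, hb.2⟩ h)
    set v := (T^[n] z + T^[n] b) / 2 with hv
    have hv1 : v ∈ uIcc (T^[n] z) (T^[n] b) := by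
      rcases le_total (T^[n] z) (T^[n] b) with h | h
      · rw [uIcc_of_le h]
        exact ⟨by rw [hv]; linarith, by rw [hv]; linarith⟩
      · rw [uIcc_of_ge h]
        exact ⟨by rw [hv]; linarith, by rw [hv]; linarith⟩
    have hvz : v ≠ T^[n] z := by
      rcases lt_or_gt_of_ne hzb with h | h <;> (rw [hv]; intro hh; linarith)
    have hvb : v ≠ T^[n] b := by
      rcases lt_or_gt_of_ne hzb with h | h <;> (rw [hv]; intro hh; linarith)
    -- β on [z,b]
    have hcontzb : ContinuousOn (T^[n]) (uIcc z b) := by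
      apply (cont_iter hT n).mono
      rw [uIcc_of_le hz2.le]
      exact fun y hy => ⟨(hl0.trans (ha.1.trans hz1.le)).trans hy.1,
        hy.2.trans (hb.2.trans hT.hc.2.le)⟩
    obtain ⟨β, hβm, hβ⟩ := intermediate_value_uIcc hcontzb hv1
    rw [uIcc_of_le hz2.le] at hβm
    have hβz : z < β := lt_of_le_of_ne hβm.1 (fun h => hvz (by rw [← hβ, ← h]))
    -- α on [a,z]
    have hcontaz : ContinuousOn (T^[n]) (uIcc a z) := by
      apply (cont_iter hT n).mono
      rw [uIcc_of_le hz1.le]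
      exact fun y hy => ⟨(hl0.trans ha.1).trans hy.1, hy.2.trans (hzc.trans hT.hc.2.le)⟩
    have hv2 : v ∈ uIcc (T^[n] a) (T^[n] z) := by rw [habv, uIcc_comm]; exact hv1
    obtain ⟨α, hαm, hα⟩ := intermediate_value_uIcc hcontaz hv2
    rw [uIcc_of_le hz1.le] at hαm
    have hαa : a < α := lt_of_le_of_ne hαm.1
      (fun h => hvb (by rw [← hα, ← h, habv]))
    have hαz : α < z := lt_of_le_of_ne hαm.2 (fun h => hvz (by rw [← hα, h]))
    obtain ⟨x', hx'S, hx'α⟩ :=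
      exists_lt_of_csInf_lt hne (hinf ▸ (lt_of_le_of_lt ha.1 hαa))
    have : α = β := hx'S.2 ⟨hx'α.le, hαz.le.trans hzc⟩
      ⟨(hx'α.trans (hαz.trans hβz)).le, hβm.2.trans hb.2⟩ (by rw [hα, hβ])
    exact absurd this (ne_of_lt (hαz.trans hβz))
  intro a ha b hb hab
  by_contra hne2
  rcases lt_trichotomy a b with h | h | h
  · exact key a b ha hb h hab
  · exact hne2 h
  · exact key b a hb ha h hab.symm

/-- two-sided IVT contradiction: interior point maps to `c`, endpoints map below `c`. -/
lemma two_sided_lt (hT : Unimodal T c) {x y z : ℝ} {N : ℕ}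
    (hx0 : 0 ≤ x) (hxy : x ≤ y) (hyz : y ≤ z) (hzc : z ≤ c)
    (hfy : T^[N] y = c) (hfx : T^[N] x < c) (hfz : T^[N] z < c)
    (hinj : Set.InjOn (T^[N]) (Set.Icc x z)) : False := by
  have hxy' : x < y := by
    rcases eq_or_lt_of_le hxy with h | h
    · rw [← h] at hfy; exact absurd hfy hfx.ne
    · exact h
  have hyz' : y < z := by
    rcases eq_or_lt_of_le hyz with h | h
    · rw [h] at hfy; exact absurd hfy hfz.ne
    · exact h
  set v := (max (T^[N] x) (T^[N] z) + c) / 2 with hv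
  have hM : max (T^[N] x) (T^[N] z) < c := max_lt hfx hfz
  have hv1 : max (T^[N] x) (T^[N] z) < v := by rw [hv]; linarith
  have hv2 : v < c := by rw [hv]; linarith
  have hsub : Icc x z ⊆ Icc (0:ℝ) 1 :=
    fun w hw => ⟨hx0.trans hw.1, hw.2.trans (hzc.trans hT.hc.2.le)⟩
  have hc1 : ContinuousOn (T^[N]) (uIcc x y) := by
    apply (cont_iter hT N).mono; rw [uIcc_of_le hxy]
    exact (Icc_subset_Icc le_rfl hyz).trans hsub
  obtain ⟨α, hαm, hα⟩ := intermediate_value_uIcc hc1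
    (show v ∈ uIcc (T^[N] x) (T^[N] y) by
      rw [hfy, uIcc_of_le hfx.le]
      exact ⟨(le_max_left _ _).trans hv1.le, hv2.le⟩)
  have hc2 : ContinuousOn (T^[N]) (uIcc y z) := by
    apply (cont_iter hT N).mono; rw [uIcc_of_le hyz]
    exact (Icc_subset_Icc hxy le_rfl).trans hsub
  obtain ⟨β, hβm, hβ⟩ := intermediate_value_uIcc hc2
    (show v ∈ uIcc (T^[N] y) (T^[N] z) by
      rw [hfy, uIcc_of_ge hfz.le]
      exact ⟨(le_max_right _ _).trans hv1.le, hv2.le⟩)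
  rw [uIcc_of_le hxy] at hαm
  rw [uIcc_of_le hyz] at hβm
  have hαy : α < y := lt_of_le_of_ne hαm.2 (fun h => hv2.ne (by rw [← hα, h, hfy]))
  have hβy : y < β := lt_of_le_of_ne hβm.1 (fun h => hv2.ne (by rw [← hβ, ← h, hfy]))
  have : α = β := hinj ⟨hαm.1, hαm.2.trans hyz⟩ ⟨hxy.trans hβm.1, hβm.2⟩ (by rw [hα, hβ])
  exact absurd this (ne_of_lt (hαy.trans hβy))

/-- mirrored version: endpoints map above `c`. -/
lemma two_sided_gt (hT : Unimodal T c) {x y z : ℝ} {N : ℕ}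
    (hx0 : 0 ≤ x) (hxy : x ≤ y) (hyz : y ≤ z) (hzc : z ≤ c)
    (hfy : T^[N] y = c) (hfx : c < T^[N] x) (hfz : c < T^[N] z)
    (hinj : Set.InjOn (T^[N]) (Set.Icc x z)) : False := by
  have hxy' : x < y := by
    rcases eq_or_lt_of_le hxy with h | h
    · rw [← h] at hfy; exact absurd hfy hfx.ne'
    · exact h
  have hyz' : y < z := by
    rcases eq_or_lt_of_le hyz with h | h
    · rw [h] at hfy; exact absurd hfy hfz.ne'
    · exact h
  set v := (c + min (T^[N] x) (T^[N] z)) / 2 with hv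
  have hM : c < min (T^[N] x) (T^[N] z) := lt_min hfx hfz
  have hv1 : v < min (T^[N] x) (T^[N] z) := by rw [hv]; linarith
  have hv2 : c < v := by rw [hv]; linarith
  have hsub : Icc x z ⊆ Icc (0:ℝ) 1 :=
    fun w hw => ⟨hx0.trans hw.1, hw.2.trans (hzc.trans hT.hc.2.le)⟩
  have hc1 : ContinuousOn (T^[N]) (uIcc x y) := by
    apply (cont_iter hT N).mono; rw [uIcc_of_le hxy]
    exact (Icc_subset_Icc le_rfl hyz).trans hsub
  obtain ⟨α, hαm, hα⟩ := intermediate_value_uIcc hc1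
    (show v ∈ uIcc (T^[N] x) (T^[N] y) by
      rw [hfy, uIcc_of_ge hfx.le]
      exact ⟨hv2.le, hv1.le.trans (min_le_left _ _)⟩)
  have hc2 : ContinuousOn (T^[N]) (uIcc y z) := by
    apply (cont_iter hT N).mono; rw [uIcc_of_le hyz]
    exact (Icc_subset_Icc hxy le_rfl).trans hsub
  obtain ⟨β, hβm, hβ⟩ := intermediate_value_uIcc hc2
    (show v ∈ uIcc (T^[N] y) (T^[N] z) by
      rw [hfy, uIcc_of_le hfz.le]
      exact ⟨hv2.le, hv1.le.trans (min_le_right _ _)⟩)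
  rw [uIcc_of_le hxy] at hαm
  rw [uIcc_of_le hyz] at hβm
  have hαy : α < y := lt_of_le_of_ne hαm.2 (fun h => hv2.ne' (by rw [← hα, h, hfy]))
  have hβy : y < β := lt_of_le_of_ne hβm.1 (fun h => hv2.ne' (by rw [← hβ, ← h, hfy]))
  have : α = β := hinj ⟨hαm.1, hαm.2.trans hyz⟩ ⟨hxy.trans hβm.1, hβm.2⟩ (by rw [hα, hβ])
  exact absurd this (ne_of_lt (hαy.trans hβy))


lemma main_step (hT : Unimodal T c)
    (hnp : ∀ n, 1 ≤ n → T^[n] c ≠ c)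
    (S Q : ℕ → ℕ) (hmono : StrictMono S) (hS0 : S 0 = 1)
    (hrec : ∀ l, 1 ≤ l → S l = S (l - 1) + S (Q l))
    (hcut : ∀ n, 1 ≤ n → (CuttingTime T c n ↔ ∃ l, S l = n))
    (κ : ℕ → ℕ) (hκ : ∀ n, κ n = if T^[n] c < c then 0 else 1)
    (k : ℕ) (hk : 1 ≤ k) :
    (∀ i, 1 ≤ i → i < S (Q k) → κ (S (k - 1) + i) = κ i) ∧
      κ (S k) = 1 - κ (S (Q k)) := by
  set n := S (k - 1) with hn
  set m := S (Q k) with hm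
  have hn1 : 1 ≤ n := by rw [hn, ← hS0]; exact hmono.monotone (Nat.zero_le _)
  have hm1 : 1 ≤ m := by rw [hm, ← hS0]; exact hmono.monotone (Nat.zero_le _)
  have hj : S k = n + m := hrec k hk
  obtain ⟨p, hpmem, hpc⟩ := (hcut n hn1).mpr ⟨k - 1, rfl⟩
  have hp0 : 0 ≤ p := (leftEnd_nonneg hT n).trans hpmem.1
  have hpcle : p ≤ c := hpmem.2
  have hsubp : Icc p c ⊆ Icc (0:ℝ) 1 := sub01 hT hp0
  -- no cutting times strictly between n and n + m
  have noCut : ∀ j', n < j' → j' < n + m → ¬ CuttingTime T c j' := by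
    intro j' h1 h2 hcut'
    obtain ⟨t, ht⟩ := (hcut j' (by omega)).mp hcut'
    have h3 : k - 1 < t := hmono.lt_iff_lt.mp (by rw [ht, ← hn]; exact h1)
    have h4 : k ≤ t := by omega
    have h5 : n + m ≤ j' := by rw [← hj, ← ht]; exact hmono.monotone h4
    omega
  -- the image of `[p,c]` stays on one side of `c` at each intermediate step
  have side : ∀ i, i < m → Set.InjOn (T^[n + i]) (Set.Icc p c) →
      (∀ y ∈ Icc p c, T^[n + i] y ≤ c) ∨ (∀ y ∈ Icc p c, c ≤ T^[n + i] y) := by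
    intro i him hA
    by_contra hno
    push_neg at hno
    obtain ⟨⟨y1, hy1m, hy1⟩, ⟨y2, hy2m, hy2⟩⟩ := hno
    have hcont : ContinuousOn (T^[n + i]) (uIcc y2 y1) :=
      (cont_iter hT _).mono ((Set.uIcc_subset_Icc hy2m hy1m).trans hsubp)
    obtain ⟨ξ, hξm, hξ⟩ := intermediate_value_uIcc hcont
      (show c ∈ uIcc (T^[n + i] y2) (T^[n + i] y1) by
        rw [uIcc_of_le (hy2.trans hy1).le]; exact ⟨hy2.le, hy1.le⟩)
    have hξp : ξ ∈ Icc p c := Set.uIcc_subset_Icc hy2m hy1m hξm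
    rcases Nat.eq_zero_or_pos i with hi0 | hi1
    · subst hi0
      rw [Nat.add_zero] at hy1 hy2 hξ hA
      have hy1p : p < y1 := lt_of_le_of_ne hy1m.1
        (by intro h; rw [← h, hpc] at hy1; exact lt_irrefl c hy1)
      have hy2p : p < y2 := lt_of_le_of_ne hy2m.1
        (by intro h; rw [← h, hpc] at hy2; exact lt_irrefl c hy2)
      have hξeq : ξ = p := hA hξp ⟨le_rfl, hpcle⟩ (hξ.trans hpc.symm)
      rcases Set.mem_uIcc.mp hξm with ⟨h1, _⟩ | ⟨h1, _⟩ <;> rw [hξeq] at h1 <;> linarith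
    · have hle : leftEnd T c (n + i) ≤ p := leftEnd_le hT hp0 hA
      exact noCut (n + i) (by omega) (by omega) ⟨ξ, ⟨hle.trans hξp.1, hξp.2⟩, hξ⟩
  -- injectivity propagates
  have ext : ∀ i, i < m → Set.InjOn (T^[n + i]) (Set.Icc p c) →
      Set.InjOn (T^[n + i + 1]) (Set.Icc p c) := by
    intro i him hA
    rcases side i him hA with hle | hge
    · intro a ha b hb hab
      apply hA ha hb
      have ha' : T^[n + i] a ∈ Icc (0:ℝ) c := ⟨(hT.maps.iterate _ (hsubp ha)).1, hle a ha⟩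
      have hb' : T^[n + i] b ∈ Icc (0:ℝ) c := ⟨(hT.maps.iterate _ (hsubp hb)).1, hle b hb⟩
      apply hT.mono.injOn ha' hb'
      rwa [← Function.iterate_succ_apply' T (n + i) a, ← Function.iterate_succ_apply' T (n + i) b]
    · intro a ha b hb hab
      apply hA ha hb
      have ha' : T^[n + i] a ∈ Icc c 1 := ⟨hge a ha, (hT.maps.iterate _ (hsubp ha)).2⟩
      have hb' : T^[n + i] b ∈ Icc c 1 := ⟨hge b hb, (hT.maps.iterate _ (hsubp hb)).2⟩
      apply hT.anti.injOn ha' hb'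
      rwa [← Function.iterate_succ_apply' T (n + i) a, ← Function.iterate_succ_apply' T (n + i) b]
  have A : ∀ i, i ≤ m → Set.InjOn (T^[n + i]) (Set.Icc p c) := by
    intro i
    induction i with
    | zero =>
        intro _
        have := (injOn_leftEnd hT n).mono (Icc_subset_Icc hpmem.1 le_rfl)
        simpa using this
    | succ i ih => intro h; exact ext i (by omega) (ih (by omega))
  have hvp : ∀ i, T^[n + i] p = T^[i] c := by
    intro i
    rw [add_comm, Function.iterate_add_apply, hpc]
  have hsame : ∀ i, 1 ≤ i → i < m → κ (n + i) = κ i := by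
    intro i h1 h2
    have hA := A i h2.le
    have h1' : T^[i] c ≠ c := hnp i h1
    have h2' : T^[n + i] c ≠ c := hnp (n + i) (by omega)
    rcases side i h2 hA with hle | hge
    · have hci : T^[i] c < c :=
        lt_of_le_of_ne (by rw [← hvp i]; exact hle p ⟨le_rfl, hpcle⟩) h1'
      have hcni : T^[n + i] c < c := lt_of_le_of_ne (hle c ⟨hpcle, le_rfl⟩) h2'
      rw [hκ (n + i), hκ i, if_pos hcni, if_pos hci]
    · have hci : c < T^[i] c :=
        lt_of_le_of_ne (by rw [← hvp i]; exact hge p ⟨le_rfl, hpcle⟩) (Ne.symm h1')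
      have hcni : c < T^[n + i] c := lt_of_le_of_ne (hge c ⟨hpcle, le_rfl⟩) (Ne.symm h2')
      rw [hκ (n + i), hκ i, if_neg (not_lt.2 hcni.le), if_neg (not_lt.2 hci.le)]
  refine ⟨hsame, ?_⟩
  obtain ⟨q, hqmem, hqc⟩ := (hcut (S k) (by omega)).mpr ⟨k, rfl⟩
  rw [hj] at hqc
  have hq0 : 0 ≤ q := (leftEnd_nonneg hT _).trans hqmem.1
  have hqcle : q ≤ c := hqmem.2
  have hAm : Set.InjOn (T^[n + m]) (Set.Icc p c) := A m le_rfl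
  have hmne : T^[m] c ≠ c := hnp m hm1
  have hjne : T^[n + m] c ≠ c := by rw [← hj]; exact hnp (S k) (by omega)
  have hppc : T^[n + m] p = T^[m] c := hvp m
  rcases lt_or_ge q p with hqp | hpq
  · exfalso
    have hInjq : Set.InjOn (T^[n + m]) (Set.Icc q c) := by
      rw [← hj]
      exact (injOn_leftEnd hT (S k)).mono (Icc_subset_Icc hqmem.1 le_rfl)
    have hInjqn : Set.InjOn (T^[n]) (Set.Icc q c) := injOn_of_le (by omega) hInjq
    have hTnq : T^[n] q ≠ c := by
      intro h
      have h2 : T^[n + m] q = T^[m] c := by rw [add_comm, Function.iterate_add_apply, h]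
      exact hmne (h2.symm.trans hqc)
    have hTnc : T^[n] c ≠ c := hnp n hn1
    rcases lt_or_gt_of_ne hTnq with hq1 | hq1 <;> rcases lt_or_gt_of_ne hTnc with hc1 | hc1
    · exact two_sided_lt hT hq0 hqp.le hpcle le_rfl hpc hq1 hc1 hInjqn
    · exact not_injOn hT hq0 ⟨le_rfl, hqcle⟩ ⟨hqcle, le_rfl⟩ hq1 hc1 hm1 hInjq
    · exact not_injOn hT hq0 ⟨hqcle, le_rfl⟩ ⟨le_rfl, hqcle⟩ hc1 hq1 hm1 hInjq
    · exact two_sided_gt hT hq0 hqp.le hpcle le_rfl hpc hq1 hc1 hInjqn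
  · have hopp : (T^[m] c < c ∧ c < T^[n + m] c) ∨ (T^[n + m] c < c ∧ c < T^[m] c) := by
      rcases lt_or_gt_of_ne hmne with h1 | h1 <;> rcases lt_or_gt_of_ne hjne with h2 | h2
      · exact absurd (two_sided_lt hT hp0 hpq hqcle le_rfl hqc
          (by rw [hppc]; exact h1) h2 hAm) not_false
      · exact Or.inl ⟨h1, h2⟩
      · exact Or.inr ⟨h2, h1⟩
      · exact absurd (two_sided_gt hT hp0 hpq hqcle le_rfl hqc
          (by rw [hppc]; exact h1) h2 hAm) not_false
    rw [hj, hκ (n + m), hκ m]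
    rcases hopp with ⟨h1, h2⟩ | ⟨h1, h2⟩
    · rw [if_neg (not_lt.2 h2.le), if_pos h1]
    · rw [if_pos h1, if_neg (not_lt.2 h2.le)]

end CutAux

/-- For a unimodal map with kneading invariant `κ` (with `κ_n = 0` if `c_n < c`, `= 1`
if `c_n > c`) and `τ(n) = min{m > 0 : κ_m ≠ κ_{m+n}}`, the cutting times satisfy
`S_0 = 1` and `S_{k+1} = S_k + τ(S_k)`; equivalently,
`κ_1 ⋯ κ_{S_k} = κ_1 ⋯ κ_{S_{k−1}} κ_1 ⋯ κ'_{S_{Q(k)}}`. -/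
theorem cutting_times_from_kneading_invariant (T : ℝ → ℝ) (c : ℝ) (hT : Unimodal T c)
    (hnp : ∀ n, 1 ≤ n → T^[n] c ≠ c)
    (S Q : ℕ → ℕ) (hmono : StrictMono S) (hS0 : S 0 = 1) (hS1 : S 1 = 2)
    (hQlt : ∀ l, 1 ≤ l → Q l < l) (hrec : ∀ l, 1 ≤ l → S l = S (l - 1) + S (Q l))
    (hcut : ∀ n, 1 ≤ n → (CuttingTime T c n ↔ ∃ l, S l = n))
    (κ : ℕ → ℕ) (hκ : ∀ n, κ n = if T^[n] c < c then 0 else 1) :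
    (∀ k : ℕ, S (k + 1) = S k + sInf {m | 0 < m ∧ κ m ≠ κ (m + S k)}) ∧
    (∀ k, 1 ≤ k →
      (∀ i, 1 ≤ i → i < S (Q k) → κ (S (k - 1) + i) = κ i) ∧
      κ (S k) = 1 - κ (S (Q k))) := by
  have main := fun k hk => CutAux.main_step hT hnp S Q hmono hS0 hrec hcut κ hκ k hk
  constructor
  · intro k
    obtain ⟨hsame, hflip⟩ := main (k + 1) (by omega)
    have hm1 : 1 ≤ S (Q (k + 1)) := by rw [← hS0]; exact hmono.monotone (Nat.zero_le _)
    have hrec' : S (k + 1) = S k + S (Q (k + 1)) := by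
      have := hrec (k + 1) (by omega)
      simpa using this
    have hk1 : (k + 1 : ℕ) - 1 = k := by omega
    rw [hk1] at hsame
    have hκ01 : ∀ j, κ j = 0 ∨ κ j = 1 := by intro j; rw [hκ]; split_ifs <;> simp
    have hmem : S (Q (k + 1)) ∈ {m | 0 < m ∧ κ m ≠ κ (m + S k)} := by
      refine ⟨hm1, ?_⟩
      have he : κ (S (Q (k + 1)) + S k) = κ (S (k + 1)) := by rw [add_comm, ← hrec']
      rw [he, hflip]
      rcases hκ01 (S (Q (k + 1))) with h | h <;> rw [h] <;> omega
    have hinf : sInf {m | 0 < m ∧ κ m ≠ κ (m + S k)} = S (Q (k + 1)) := by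
      apply le_antisymm (Nat.sInf_le hmem)
      apply le_csInf ⟨_, hmem⟩
      intro b hb
      by_contra hlt
      push_neg at hlt
      have hb1 : 1 ≤ b := hb.1
      have := hsame b hb1 hlt
      exact hb.2 (by rw [Nat.add_comm b (S k)]; exact this.symm)
    rw [hinf]; exact hrec'
  · exact main
end
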